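/- The natural map from the free semigroup F on S ∪ Γ to Σ restricts to an injection on S and to an injection on Γ (i.e., distinct elements of S remain distinct in Σ, and likewise for Γ). -/

import Mathlib

open FreeSemigroup

section GammaSemigroup

variable {S Γ : Type}

/-- One-step rewriting on words over S ⊕ Γ. -/
inductive GStep (m : S → Γ → S → S) (γ₀ : Γ) : List (S ⊕ Γ) → List (S ⊕ Γ) → Prop
  | gg (u v : List (S ⊕ Γ)) (γ₁ γ₂ : Γ) :
      GStep m γ₀ (u ++ Sum.inr γ₁ :: Sum.inr γ₂ :: v) (u ++ Sum.inr γ₁ :: v)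
  | xgy (u v : List (S ⊕ Γ)) (x : S) (γ : Γ) (y : S) :
      GStep m γ₀ (u ++ Sum.inl x :: Sum.inr γ :: Sum.inl y :: v) (u ++ Sum.inl (m x γ y) :: v)
  | xy (u v : List (S ⊕ Γ)) (x y : S) :
      GStep m γ₀ (u ++ Sum.inl x :: Sum.inl y :: v) (u ++ Sum.inl (m x γ₀ y) :: v)

/-- The defining relations on the free semigroup on S ⊕ Γ. -/
def GRel (m : S → Γ → S → S) (γ₀ : Γ) :
    FreeSemigroup (S ⊕ Γ) → FreeSemigroup (S ⊕ Γ) → Prop :=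
  fun a b =>
    (∃ γ₁ γ₂ : Γ, a = of (Sum.inr γ₁) * of (Sum.inr γ₂) ∧ b = of (Sum.inr γ₁)) ∨
    (∃ (x y : S) (γ : Γ), a = of (Sum.inl x) * of (Sum.inr γ) * of (Sum.inl y) ∧
      b = of (Sum.inl (m x γ y))) ∨
    (∃ x y : S, a = of (Sum.inl x) * of (Sum.inl y) ∧ b = of (Sum.inl (m x γ₀ y)))

/-- The congruence generated by the defining relations. -/
def GCon (m : S → Γ → S → S) (γ₀ : Γ) : Con (FreeSemigroup (S ⊕ Γ)) := conGen (GRel m γ₀)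

/-- The universal semigroup Σ of the Γ-semigroup S. -/
abbrev USem (m : S → Γ → S → S) (γ₀ : Γ) := (GCon m γ₀).Quotient

/-- The canonical map μ : S → Σ. -/
def gmu (m : S → Γ → S → S) (γ₀ : Γ) (x : S) : USem m γ₀ :=
  ((of (Sum.inl x) : FreeSemigroup (S ⊕ Γ)) : (GCon m γ₀).Quotient)

/-- The canonical map Γ → Σ. -/
def giota (m : S → Γ → S → S) (γ₀ : Γ) (γ : Γ) : USem m γ₀ :=
  ((of (Sum.inr γ) : FreeSemigroup (S ⊕ Γ)) : (GCon m γ₀).Quotient)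

/-- Principal left ideal of an element of a semigroup. -/
def pLeft {T : Type} [Semigroup T] (a : T) : Set T := {w | ∃ t : T, w = t * a} ∪ {a}

/-- Principal right ideal of an element of a semigroup. -/
def pRight {T : Type} [Semigroup T] (a : T) : Set T := {w | ∃ t : T, w = a * t} ∪ {a}

/-- Principal left ideal in the Γ-semigroup: SΓx ∪ {x}. -/
def pLeftG (m : S → Γ → S → S) (x : S) : Set S := {y | ∃ (s : S) (γ : Γ), y = m s γ x} ∪ {x}

/-- Principal right ideal in the Γ-semigroup: xΓS ∪ {x}. -/
def pRightG (m : S → Γ → S → S) (x : S) : Set S := {y | ∃ (γ : Γ) (s : S), y = m x γ s} ∪ {x}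

/-- Green's H relation on the Γ-semigroup. -/
def HrelG (m : S → Γ → S → S) (a b : S) : Prop := pLeftG m a = pLeftG m b ∧ pRightG m a = pRightG m b

/-- S_δ is a simple semigroup: its only two-sided ideal is S itself. -/
def SimpleAt (m : S → Γ → S → S) (δ : Γ) : Prop :=
  ∀ J : Set S, J.Nonempty → (∀ t : S, ∀ j ∈ J, m t δ j ∈ J ∧ m j δ t ∈ J) → J = Set.univ

/-- e is an idempotent of S_δ. -/
def IdemAt (m : S → Γ → S → S) (δ : Γ) (e : S) : Prop := m e δ e = e

/-- e is a primitive idempotent of S_δ. -/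
def PrimAt (m : S → Γ → S → S) (δ : Γ) (e : S) : Prop :=
  IdemAt m δ e ∧ ∀ f, IdemAt m δ f → m e δ f = f → m f δ e = f → f = e

/-- S_δ is completely simple. -/
def CSimpleAt (m : S → Γ → S → S) (δ : Γ) : Prop := SimpleAt m δ ∧ ∃ e, PrimAt m δ e

/-- S_δ has no zero element. -/
def NoZeroAt (m : S → Γ → S → S) (δ : Γ) : Prop := ¬ ∃ z : S, ∀ t : S, m z δ t = z ∧ m t δ z = z

/-- L is a left ideal of S_δ. -/
def LIdealAt (m : S → Γ → S → S) (δ : Γ) (L : Set S) : Prop :=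
  L.Nonempty ∧ ∀ t : S, ∀ l ∈ L, m t δ l ∈ L

/-- L is a minimal left ideal of S_δ. -/
def MinLIdealAt (m : S → Γ → S → S) (δ : Γ) (L : Set S) : Prop :=
  LIdealAt m δ L ∧ ∀ L' ⊆ L, LIdealAt m δ L' → L' = L

/-- S_δ is a group. -/
def GroupAt (m : S → Γ → S → S) (δ : Γ) : Prop :=
  ∃ e : S, (∀ a, m e δ a = a ∧ m a δ e = a) ∧ ∀ a, ∃ b, m a δ b = e ∧ m b δ a = e

/-- G is a subgroup (a sub-semigroup that is a group) of the semigroup T. -/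
def IsSubgroupOf {T : Type} [Semigroup T] (G : Set T) : Prop :=
  (∀ a ∈ G, ∀ b ∈ G, a * b ∈ G) ∧
  ∃ e ∈ G, (∀ g ∈ G, e * g = g ∧ g * e = g) ∧ ∀ g ∈ G, ∃ h ∈ G, g * h = e ∧ h * g = e

/-- The set Σ' = Σ \ Γ. -/
def USem' (m : S → Γ → S → S) (γ₀ : Γ) : Set (USem m γ₀) := {w | ¬ ∃ γ : Γ, w = giota m γ₀ γ}

end GammaSemigroup

/-!
Σ has an explicit model: every word over `S ⊕ Γ` reduces either to a single `γ` or to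
`α? x β?`, a single element of `S` with at most one letter of `Γ` on each side. Multiplying two
such forms collapses the letters between the two elements of `S` to the leftmost one (or to `γ₀`
if there is none), and associativity of `m` makes this a semigroup. The letters of `S ⊕ Γ` map to
pairwise distinct normal forms and the defining relations hold there, so the letters stay distinct
in Σ.
-/

section UniversalProperty

variable {S Γ : Type} (m : S → Γ → S → S) (γ₀ : Γ)

theorem gCon_le_ker_lift {T : Type} [Semigroup T] (f : S ⊕ Γ → T)
    (hγγ : ∀ γ₁ γ₂ : Γ, f (.inr γ₁) * f (.inr γ₂) = f (.inr γ₁))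
    (hxγy : ∀ (x y : S) (γ : Γ), f (.inl x) * f (.inr γ) * f (.inl y) = f (.inl (m x γ y)))
    (hxy : ∀ x y : S, f (.inl x) * f (.inl y) = f (.inl (m x γ₀ y))) :
    GCon m γ₀ ≤ Con.ker (FreeSemigroup.lift f) := by
  refine Con.conGen_le.mpr ?_
  rintro a b (⟨γ₁, γ₂, rfl, rfl⟩ | ⟨x, y, γ, rfl, rfl⟩ | ⟨x, y, rfl, rfl⟩) <;>
    simp only [Con.ker_rel, map_mul, FreeSemigroup.lift_of, hγγ, hxγy, hxy]

theorem eq_of_mk_of_eq_mk_of {T : Type} [Semigroup T] {f : S ⊕ Γ → T}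
    (hf : GCon m γ₀ ≤ Con.ker (FreeSemigroup.lift f)) {a b : S ⊕ Γ}
    (h : ((of a : FreeSemigroup (S ⊕ Γ)) : USem m γ₀) = of b) : f a = f b := by
  simpa using hf ((Con.eq _).mp h)

end UniversalProperty

inductive NormalForm (S Γ : Type)
  | word (α : Option Γ) (x : S) (β : Option Γ)
  | letter (γ : Γ)

namespace NormalForm

variable {S Γ : Type} (m : S → Γ → S → S) (γ₀ : Γ)

def mul : NormalForm S Γ → NormalForm S Γ → NormalForm S Γ
  | letter γ, letter _ => letter γ
  | letter γ, word _ x β => word (some γ) x β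
  | word α x β, letter γ => word α x (some (β.getD γ))
  | word α x β, word α' y β' => word α (m x (β.getD (α'.getD γ₀)) y) β'

theorem mul_assoc (assoc : ∀ (a b c : S) (α β : Γ), m (m a α b) β c = m a α (m b β c))
    (p q r : NormalForm S Γ) : mul m γ₀ (mul m γ₀ p q) r = mul m γ₀ p (mul m γ₀ q r) := by
  cases p <;> cases q <;> cases r <;> simp [mul, assoc]

abbrev semigroup (assoc : ∀ (a b c : S) (α β : Γ), m (m a α b) β c = m a α (m b β c)) :
    Semigroup (NormalForm S Γ) where
  mul := mul m γ₀
  mul_assoc := mul_assoc m γ₀ assoc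

def ofLetter : S ⊕ Γ → NormalForm S Γ
  | .inl x => word none x none
  | .inr γ => letter γ

end NormalForm

theorem stmt_general (S Γ : Type) (m : S → Γ → S → S)
    (assoc : ∀ (a b c : S) (α β : Γ), m (m a α b) β c = m a α (m b β c)) (γ₀ : Γ) :
    Function.Injective (gmu m γ₀) ∧ Function.Injective (giota m γ₀) := by
  let _ := NormalForm.semigroup m γ₀ assoc
  have hker : GCon m γ₀ ≤ Con.ker (FreeSemigroup.lift NormalForm.ofLetter) :=
    gCon_le_ker_lift m γ₀ _ (fun _ _ => rfl) (fun _ _ _ => rfl) (fun _ _ => rfl)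
  refine ⟨fun x y h => ?_, fun γ γ' h => ?_⟩
  · simpa [NormalForm.ofLetter] using eq_of_mk_of_eq_mk_of m γ₀ hker h
  · simpa [NormalForm.ofLetter] using eq_of_mk_of_eq_mk_of m γ₀ hker h

theorem stmt (S Γ : Type) [Nonempty S] [Nonempty Γ] (m : S → Γ → S → S)
    (assoc : ∀ (a b c : S) (α β : Γ), m (m a α b) β c = m a α (m b β c)) (γ₀ : Γ) :
    Function.Injective (gmu m γ₀) ∧ Function.Injective (giota m γ₀) :=
  stmt_general S Γ m assoc γ₀
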